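/- Let E be a set and let k·F_A(E) be the k-vector space with basis the angularly E-decorated rooted forests (with arbitrary, possibly repeated, decorations from E). Then k·F_A(E), equipped with the product ⋄ and the grafting operator B⁺, is an associative unital Rota-Baxter algebra of weight λ: ⋄ is associative with unit •, and B⁺(F) ⋄ B⁺(G) = B⁺( B⁺(F) ⋄ G + F ⋄ B⁺(G) + λ·(F ⋄ G) ) for all F, G ∈ k·F_A(E). -/

import Mathlib

/-!
Preamble: angularly decorated planar rooted trees and forests, the species `ADF` of
pure angularly decorated forests, the product `⋄`, the grafting operator `B⁺`,
and the augmentation `ε`, following Foissy–Guo–Peng–Xie–Zhang,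
"Species of Rota-Baxter algebras by rooted trees, twisted bialgebras and Fock functors".
-/

attribute [local instance 10] Classical.propDecidable

-- Angularly decorated planar rooted trees (`ATree`) and forests (`AForest`) with
-- angles decorated by elements of `E`.
mutual
  inductive ATree (E : Type) : Type where
    | leaf : ATree E
    | graft : AForest E → ATree E
  inductive AForest (E : Type) : Type where
    | single : ATree E → AForest E
    | cons : ATree E → E → AForest E → AForest E
end

mutual
  /-- The depth of an angularly decorated tree. -/
  def ATree.depth {E : Type} : ATree E → ℕ
    | .leaf => 0
    | .graft F => AForest.depth F + 1
  /-- The depth of an angularly decorated forest. -/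
  def AForest.depth {E : Type} : AForest E → ℕ
    | .single T => ATree.depth T
    | .cons T _ G => max (ATree.depth T) (AForest.depth G)
end

mutual
  /-- The list of angle decorations of a tree, from left to right. -/
  def ATree.decs {E : Type} : ATree E → List E
    | .leaf => []
    | .graft F => AForest.decs F
  /-- The list of angle decorations of a forest, from left to right. -/
  def AForest.decs {E : Type} : AForest E → List E
    | .single T => ATree.decs T
    | .cons T x G => ATree.decs T ++ x :: AForest.decs G
end

mutual
  /-- Relabelling the angle decorations of a tree along a map. -/
  def ATree.relabel {E E' : Type} (f : E → E') : ATree E → ATree E'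
    | .leaf => .leaf
    | .graft F => .graft (AForest.relabel f F)
  /-- Relabelling the angle decorations of a forest along a map. -/
  def AForest.relabel {E E' : Type} (f : E → E') : AForest E → AForest E'
    | .single T => .single (ATree.relabel f T)
    | .cons T x G => .cons (ATree.relabel f T) (f x) (AForest.relabel f G)
end

/-- The single-vertex tree `•`, as a forest. -/
def bulletF (E : Type) : AForest E := .single .leaf

/-- The product `⋄` of angularly decorated forests, with values in linear combinations
of angularly decorated forests.  It is defined by induction on the sum of depths:
`• ⋄ F' = F'`, `F ⋄ • = F`,
`(T x G) ⋄ F' = T x (G ⋄ F')`,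
and for trees `B⁺(F) ⋄ B⁺(F') = B⁺(B⁺(F) ⋄ F') + B⁺(F ⋄ B⁺(F')) + λ B⁺(F ⋄ F')`,
placed back into the surrounding forest. -/
noncomputable def forestMul {k : Type} [Field k] {E : Type} (lam : k) :
    AForest E → AForest E → (AForest E →₀ k)
  | .single .leaf, F' => Finsupp.single F' 1
  | F, .single .leaf => Finsupp.single F 1
  | .cons T x G, F' =>
      Finsupp.mapDomain (fun H => AForest.cons T x H) (forestMul lam G F')
  | .single (.graft F), .cons .leaf y G' =>
      Finsupp.single (AForest.cons (ATree.graft F) y G') 1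
  | .single (.graft F), .cons (.graft F') y G' =>
      Finsupp.mapDomain (fun S => AForest.cons S y G')
        (Finsupp.mapDomain ATree.graft
          (forestMul lam (AForest.single (ATree.graft F)) F' +
           forestMul lam F (AForest.single (ATree.graft F')) +
           lam • forestMul lam F F'))
  | .single (.graft F), .single (.graft F') =>
      Finsupp.mapDomain AForest.single
        (Finsupp.mapDomain ATree.graft
          (forestMul lam (AForest.single (ATree.graft F)) F' +
           forestMul lam F (AForest.single (ATree.graft F')) +
           lam • forestMul lam F F'))
termination_by F F' => (AForest.depth F + AForest.depth F', sizeOf F + sizeOf F')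
decreasing_by
  all_goals
    simp only [AForest.depth, ATree.depth, AForest.cons.sizeOf_spec, AForest.single.sizeOf_spec,
      ATree.graft.sizeOf_spec, ATree.leaf.sizeOf_spec]
    rw [Prod.lex_def]
    omega

/-- A forest over the decoration set `X` is pure if each element of `X` decorates
exactly one of its angles. -/
def IsPure {E : Type} (F : AForest E) : Prop :=
  F.decs.Nodup ∧ ∀ x : E, x ∈ F.decs

/-- Pure angularly `X`-decorated rooted forests. -/
def PureForest (E : Type) : Type := {F : AForest E // IsPure F}

/-- The vector space spanned by all angularly `E`-decorated forests. -/
abbrev RawADF (k : Type) [Field k] (E : Type) : Type := AForest E →₀ k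

/-- `ADF[X]`: the vector space with basis the pure angularly `X`-decorated forests. -/
abbrev ADF (k : Type) [Field k] (E : Type) : Type := PureForest E →₀ k

variable (k : Type) [Field k]

/-- The projection from the span of all forests onto `ADF[X]` (discarding non-pure forests). -/
noncomputable def toPureL (E : Type) : RawADF k E →ₗ[k] ADF k E where
  toFun f := Finsupp.subtypeDomain IsPure f
  map_add' _ _ := Finsupp.subtypeDomain_add
  map_smul' _ _ := Finsupp.ext fun _ => rfl

/-- The inclusion of `ADF[X]` into the span of all forests. -/
noncomputable def rawOfL (E : Type) : ADF k E →ₗ[k] RawADF k E :=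
  Finsupp.lmapDomain k k Subtype.val

/-- Relabelling decorations, on linear combinations of forests. -/
noncomputable def rawRelabelL {E E' : Type} (f : E → E') : RawADF k E →ₗ[k] RawADF k E' :=
  Finsupp.lmapDomain k k (AForest.relabel f)

/-- The grafting operator `B⁺` on linear combinations of forests. -/
noncomputable def rawGraftL (E : Type) : RawADF k E →ₗ[k] RawADF k E :=
  Finsupp.lmapDomain k k (fun F => AForest.single (ATree.graft F))

/-- The Rota-Baxter operator `R_X = B⁺` on `ADF[X]`. -/
noncomputable def RadfL (E : Type) : ADF k E →ₗ[k] ADF k E :=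
  (toPureL k E).comp ((rawGraftL k E).comp (rawOfL k E))

/-- `ADF[σ]`: the action of a bijection `σ : X ≃ Y` on `ADF[X]`. -/
noncomputable def ADFmapL {E E' : Type} (σ : E ≃ E') : ADF k E →ₗ[k] ADF k E' :=
  (toPureL k E').comp ((rawRelabelL k σ).comp (rawOfL k E))

/-- The augmentation `ε_X : ADF[X] → k`, the coefficient of the single-vertex tree `•`. -/
noncomputable def epsL (E : Type) : ADF k E →ₗ[k] k :=
  (Finsupp.lapply (bulletF E)).comp (rawOfL k E)

/-- The bilinear extension of the product `⋄` to linear combinations of forests. -/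
noncomputable def rawMulL {E : Type} (lam : k) : RawADF k E →ₗ[k] RawADF k E →ₗ[k] RawADF k E :=
  Finsupp.lsum k fun F =>
    LinearMap.toSpanSingleton k (RawADF k E →ₗ[k] RawADF k E)
      (Finsupp.lsum k fun G => LinearMap.toSpanSingleton k (RawADF k E) (forestMul lam F G))

/-- `ADF[X] → ADF[X ⊔ Y]`-part of the product. -/
noncomputable def inclL (X Y : Type) : ADF k X →ₗ[k] RawADF k (X ⊕ Y) :=
  (rawRelabelL k Sum.inl).comp (rawOfL k X)

/-- `ADF[Y] → ADF[X ⊔ Y]`-part of the product. -/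
noncomputable def inclR (X Y : Type) : ADF k Y →ₗ[k] RawADF k (X ⊕ Y) :=
  (rawRelabelL k Sum.inr).comp (rawOfL k Y)

/-- The multiplication `m_{X,Y} : ADF[X] ⊗ ADF[Y] → ADF[X ⊔ Y]`, `F ⊗ G ↦ F ⋄ G`
(as a bilinear map). -/
noncomputable def mulADF (lam : k) (X Y : Type) :
    ADF k X →ₗ[k] ADF k Y →ₗ[k] ADF k (X ⊕ Y) :=
  ((((rawMulL k lam).comp (inclL k X Y)).compl₂ (inclR k X Y)).compr₂ (toPureL k (X ⊕ Y)))

theorem isPure_bulletF (E : Type) [IsEmpty E] : IsPure (bulletF E) :=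
  ⟨by simp [bulletF, AForest.decs, ATree.decs], fun x => (IsEmpty.false x).elim⟩

/-- The unit `•` of `ADF`, an element of `ADF[∅]`. -/
noncomputable def bulletADF (E : Type) [IsEmpty E] : ADF k E :=
  Finsupp.single ⟨bulletF E, isPure_bulletF E⟩ 1

/-- The two-leaf forest `• x •` whose unique angle is decorated by
the unique element `x` of a singleton set `X`. -/
def genF (E : Type) [Unique E] : AForest E :=
  .cons .leaf default (.single .leaf)

theorem isPure_genF (E : Type) [Unique E] : IsPure (genF E) := by
  constructor
  · simp [genF, AForest.decs, ATree.decs]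
  · intro x
    simp [genF, AForest.decs, ATree.decs, Unique.eq_default x]

/-- The generator `• x •` of `ADF[{x}]`. -/
noncomputable def genADF (E : Type) [Unique E] : ADF k E :=
  Finsupp.single ⟨genF E, isPure_genF E⟩ 1

/-- The map `k → ADF[X]`, `c ↦ c • bullet` if `X` is empty, and `0` otherwise. -/
noncomputable def etaADF (E : Type) : k →ₗ[k] ADF k E :=
  dite (IsEmpty E)
    (fun h => LinearMap.toSpanSingleton k (ADF k E) (@bulletADF k _ E h))
    (fun _ => 0)

/-!
Everything is multilinear, so it suffices to argue on basis forests. Write `F.append y G` for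
the forest `F y G` obtained by juxtaposing `F` and `G` with a new angle decorated by `y`. The
product is compatible with juxtaposition on both sides, `(F y G) ⋄ H = F y (G ⋄ H)` and
`F ⋄ (G y H) = (F ⋄ G) y H`, and on grafted trees it is the Rota–Baxter recursion itself, which
gives the Rota–Baxter identity directly. Associativity of basis forests then follows by induction
on the total depth and the total number of angles: juxtapositions are peeled off by the two
compatibility rules, and for three grafted trees both bracketings expand, through the
Rota–Baxter identity, into products of the same seven triples of lower total depth.
-/

section RotaBaxter

variable {R M : Type*} [CommRing R] [AddCommGroup M] [Module R M]

def IsRotaBaxter (mul : M →ₗ[R] M →ₗ[R] M) (P : M →ₗ[R] M) (lam : R) : Prop :=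
  ∀ x y, mul (P x) (P y) = P (mul (P x) y + mul x (P y) + lam • mul x y)

variable {mul : M →ₗ[R] M →ₗ[R] M} {P : M →ₗ[R] M} {lam : R}

local notation:70 x:70 " ⋆ " y:71 => mul x y

theorem IsRotaBaxter.assoc_of_assoc (hP : IsRotaBaxter mul P lam) {a b c : M}
    (h₁ : (P a ⋆ P b) ⋆ c = P a ⋆ (P b ⋆ c)) (h₂ : (P a ⋆ b) ⋆ P c = P a ⋆ (b ⋆ P c))
    (h₃ : (a ⋆ P b) ⋆ P c = a ⋆ (P b ⋆ P c)) (h₄ : (P a ⋆ b) ⋆ c = P a ⋆ (b ⋆ c))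
    (h₅ : (a ⋆ P b) ⋆ c = a ⋆ (P b ⋆ c)) (h₆ : (a ⋆ b) ⋆ P c = a ⋆ (b ⋆ P c))
    (h₇ : (a ⋆ b) ⋆ c = a ⋆ (b ⋆ c)) :
    (P a ⋆ P b) ⋆ P c = P a ⋆ (P b ⋆ P c) := by
  rw [hP a b, hP b c, hP _ c, hP a, ← hP a b, ← hP b c]
  congr 1
  simp only [map_add, map_smul, LinearMap.add_apply, LinearMap.smul_apply]
  rw [h₁, h₂, h₃, h₄, h₅, h₆, h₇]
  module

end RotaBaxter

namespace AForest

variable {E : Type}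

def append : AForest E → E → AForest E → AForest E
  | single T, y, G => cons T y G
  | cons T x F, y, G => cons T x (append F y G)

theorem append_assoc (F : AForest E) (x : E) (G : AForest E) (y : E) (H : AForest E) :
    (F.append x G).append y H = F.append x (G.append y H) :=
  match F with
  | single _ => rfl
  | cons T z F => congrArg (cons T z) (append_assoc F x G y H)

end AForest

section ForestMul

open Finsupp (mapDomain mapDomain_single mapDomain_comp)
open AForest ATree

variable {k} {E : Type} (lam : k)

theorem forestMul_bullet_left (G : AForest E) :
    forestMul lam (single leaf) G = Finsupp.single G 1 := by
  rw [forestMul]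

theorem forestMul_bullet_right (F : AForest E) :
    forestMul lam F (single leaf) = Finsupp.single F 1 := by
  match F with
  | single leaf => rw [forestMul]
  | single (graft _) => simp [forestMul]
  | cons _ _ _ => simp [forestMul]

theorem forestMul_cons_left (T : ATree E) (x : E) (F G : AForest E) :
    forestMul lam (cons T x F) G = mapDomain (cons T x) (forestMul lam F G) := by
  match G with
  | single leaf => rw [forestMul_bullet_right, forestMul_bullet_right, mapDomain_single]
  | single (graft _) => simp [forestMul]
  | cons _ _ _ => simp [forestMul]

theorem forestMul_graft_graft (A B : AForest E) :
    forestMul lam (single (graft A)) (single (graft B)) =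
      rawGraftL k E (forestMul lam (single (graft A)) B + forestMul lam A (single (graft B)) +
        lam • forestMul lam A B) := by
  rw [forestMul, ← mapDomain_comp]
  rfl

theorem forestMul_tree_cons (t T : ATree E) (z : E) (K : AForest E) :
    forestMul lam (single t) (cons T z K) =
      mapDomain (·.append z K) (forestMul lam (single t) (single T)) := by
  match t, T with
  | leaf, _ => simp [forestMul_bullet_left, AForest.append]
  | graft _, leaf => simp [forestMul, forestMul_bullet_right, AForest.append]
  | graft _, graft _ =>
    rw [forestMul, forestMul_graft_graft, rawGraftL, Finsupp.lmapDomain_apply,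
      ← mapDomain_comp, ← mapDomain_comp]
    rfl

theorem forestMul_append_left (F : AForest E) (y : E) (G H : AForest E) :
    forestMul lam (F.append y G) H = mapDomain (F.append y) (forestMul lam G H) := by
  match F with
  | single T => exact forestMul_cons_left lam T y G H
  | cons T x F =>
    rw [AForest.append, forestMul_cons_left, forestMul_append_left F, ← mapDomain_comp]
    rfl

theorem forestMul_append_right (F G : AForest E) (y : E) (H : AForest E) :
    forestMul lam F (G.append y H) = mapDomain (·.append y H) (forestMul lam F G) := by
  match F, G with
  | cons T x F, G =>
    rw [forestMul_cons_left, forestMul_cons_left, forestMul_append_right F, ← mapDomain_comp,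
      ← mapDomain_comp]
    rfl
  | single t, single T => exact forestMul_tree_cons lam t T y H
  | single t, cons T z G =>
    rw [AForest.append, forestMul_tree_cons, forestMul_tree_cons, ← mapDomain_comp]
    simp only [Function.comp_def, AForest.append_assoc]

end ForestMul

section RawADF

open Finsupp (mapDomain mapDomain_single)
open AForest ATree

variable {k} {E : Type} (lam : k)

local notation:70 f:70 " ⋄ " g:71 => rawMulL k lam f g

local notation:max "δ" F:max => Finsupp.single F (1 : k)

noncomputable def appendL (y : E) : RawADF k E →ₗ[k] RawADF k E →ₗ[k] RawADF k E :=
  Finsupp.lsum k fun F => LinearMap.toSpanSingleton k _ (Finsupp.lmapDomain k k (F.append y))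

theorem appendL_single_left (y : E) (F : AForest E) (g : RawADF k E) :
    appendL y δ F g = mapDomain (F.append y) g := by
  simp [appendL]

theorem appendL_single_right (y : E) (f : RawADF k E) (H : AForest E) :
    appendL y f δ H = mapDomain (·.append y H) f := by
  have linear : (appendL y).flip δ H = Finsupp.lmapDomain k k (·.append y H) := by
    ext F : 2
    simp [appendL]
  exact LinearMap.congr_fun linear f

theorem single_cons_eq_appendL (T : ATree E) (x : E) (F : AForest E) :
    δ (cons T x F) = appendL x δ (single T) δ F := by
  rw [appendL_single_left, mapDomain_single]
  rfl

theorem rawMulL_single_single (F G : AForest E) : δ F ⋄ δ G = forestMul lam F G := by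
  simp [rawMulL]

theorem rawGraftL_single (F : AForest E) : rawGraftL k E δ F = δ (single (graft F)) := by
  simp [rawGraftL]

theorem rawMulL_bullet_left (f : RawADF k E) : δ (single leaf : AForest E) ⋄ f = f := by
  have linear : rawMulL k lam δ (single leaf : AForest E) = LinearMap.id := by
    ext G : 2
    simp [rawMulL_single_single, forestMul_bullet_left]
  exact LinearMap.congr_fun linear f

theorem rawMulL_bullet_right (f : RawADF k E) : f ⋄ δ (single leaf : AForest E) = f := by
  have linear : (rawMulL k lam).flip δ (single leaf : AForest E) = LinearMap.id := by
    ext F : 2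
    simp [rawMulL_single_single, forestMul_bullet_right]
  exact LinearMap.congr_fun linear f

theorem isRotaBaxter_rawGraftL : IsRotaBaxter (rawMulL k lam) (rawGraftL k E) lam := by
  intro f g
  have bilinear : (rawMulL k lam ∘ₗ rawGraftL k E).compl₂ (rawGraftL k E) =
      (rawMulL k lam ∘ₗ rawGraftL k E + (rawMulL k lam).compl₂ (rawGraftL k E) +
        lam • rawMulL k lam).compr₂ (rawGraftL k E) := by
    ext F G : 4
    simp [rawGraftL_single, rawMulL_single_single, forestMul_graft_graft]
  simpa using LinearMap.congr_fun₂ bilinear f g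

theorem rawMulL_appendL_left (y : E) (f g h : RawADF k E) :
    appendL y f g ⋄ h = appendL y f (g ⋄ h) := by
  have trilinear : (appendL y).compr₂ (rawMulL k lam) =
      (LinearMap.llcomp k _ _ _ ∘ₗ appendL y).compl₂ (rawMulL k lam) := by
    ext F G H : 6
    simp [appendL_single_left, rawMulL_single_single, forestMul_append_left]
  exact LinearMap.congr_fun (LinearMap.congr_fun₂ trilinear f g) h

theorem rawMulL_appendL_right (y : E) (f g h : RawADF k E) :
    f ⋄ appendL y g h = appendL y (f ⋄ g) h := by
  have trilinear : (LinearMap.llcomp k _ _ _ ∘ₗ rawMulL k lam).compl₂ (appendL y) =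
      (rawMulL k lam).compr₂ (appendL y) := by
    ext F G H : 6
    simp [appendL_single_right, rawMulL_single_single, forestMul_append_right]
  exact LinearMap.congr_fun (LinearMap.congr_fun₂ trilinear f g) h

theorem rawMulL_single_assoc (F G H : AForest E) : (δ F ⋄ δ G) ⋄ δ H = δ F ⋄ (δ G ⋄ δ H) :=
  match F, G, H with
  | single leaf, _, _ => by rw [rawMulL_bullet_left, rawMulL_bullet_left]
  | _, single leaf, _ => by rw [rawMulL_bullet_right, rawMulL_bullet_left]
  | _, _, single leaf => by rw [rawMulL_bullet_right, rawMulL_bullet_right]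
  | cons T x F, G, H => by
    rw [single_cons_eq_appendL, rawMulL_appendL_left, rawMulL_appendL_left,
      rawMulL_single_assoc F G H, rawMulL_appendL_left]
  | single t, cons T y G, H => by
    rw [single_cons_eq_appendL, rawMulL_appendL_right, rawMulL_appendL_left,
      rawMulL_appendL_left, rawMulL_appendL_right]
  | single t, single t', cons T z H => by
    rw [single_cons_eq_appendL, rawMulL_appendL_right, rawMulL_appendL_right,
      rawMulL_appendL_right, rawMulL_single_assoc (single t) (single t') (single T)]
  | single (graft A), single (graft B), single (graft C) => by
    have step := (isRotaBaxter_rawGraftL lam).assoc_of_assoc (a := δ A) (b := δ B) (c := δ C)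
    simp only [rawGraftL_single] at step
    refine step ?_ ?_ ?_ ?_ ?_ ?_ ?_ <;> exact rawMulL_single_assoc _ _ _
termination_by (F.depth + G.depth + H.depth, F.decs.length + G.decs.length + H.decs.length)
decreasing_by
  all_goals
    simp only [AForest.depth, ATree.depth, AForest.decs, ATree.decs, List.length_append,
      List.length_cons, Prod.lex_def]
    omega

theorem rawMulL_assoc (f g h : RawADF k E) : (f ⋄ g) ⋄ h = f ⋄ (g ⋄ h) := by
  have trilinear : (rawMulL k lam).compr₂ (rawMulL k lam) =
      (LinearMap.llcomp k (RawADF k E) _ _ ∘ₗ rawMulL k lam).compl₂ (rawMulL k lam) := by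
    ext F G H : 6
    simpa using rawMulL_single_assoc lam F G H
  exact LinearMap.congr_fun (LinearMap.congr_fun₂ trilinear f g) h

end RawADF

/-- For a set `E`, the vector space `k·F_A(E)` with basis the angularly
`E`-decorated rooted forests (arbitrary, possibly repeated, decorations), equipped with the
product `⋄` and the grafting operator `B⁺`, is an associative unitary Rota-Baxter algebra of
weight `λ`: `⋄` is associative with unit `•`, and
`B⁺(F) ⋄ B⁺(G) = B⁺(B⁺(F) ⋄ G + F ⋄ B⁺(G) + λ·(F ⋄ G))`. -/
theorem raw_adf_rota_baxter_algebra (lam : k) (E : Type) :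
    -- associativity of `⋄`
    (∀ F G H : RawADF k E,
        rawMulL k lam (rawMulL k lam F G) H = rawMulL k lam F (rawMulL k lam G H))
    ∧
    -- `•` is a two-sided unit
    (∀ F : RawADF k E,
        rawMulL k lam (Finsupp.single (bulletF E) 1) F = F
        ∧ rawMulL k lam F (Finsupp.single (bulletF E) 1) = F)
    ∧
    -- the Rota-Baxter identity of weight `λ` for `B⁺`
    (∀ F G : RawADF k E,
        rawMulL k lam (rawGraftL k E F) (rawGraftL k E G) =
          rawGraftL k E
            (rawMulL k lam (rawGraftL k E F) G + rawMulL k lam F (rawGraftL k E G)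
              + lam • rawMulL k lam F G)) :=
  ⟨rawMulL_assoc lam, fun F => ⟨rawMulL_bullet_left lam F, rawMulL_bullet_right lam F⟩,
    isRotaBaxter_rawGraftL lam⟩
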